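/- Let H = [[1,0],[0,−1]] and E₊ = [[0,1],[0,0]] in Matrix (Fin 2) (Fin 2) ℂ. Let Ω ⊆ ℂ be open, κ > 0 a real constant, and let a, ψ : Ω → ℂ be smooth with ψ nowhere vanishing. Define A_z := a H, A_z̄ := −conj(a) H, Ψ := ψ E₊. If on Ω (i) ∂_z̄ Ψ + [A_z̄, Ψ] = 0 and (ii) ∂_z A_z̄ − ∂_z̄ A_z + [A_z, A_z̄] = −(2/κ)[Ψᴴ, Ψ], then the positive function ρ := |ψ|² satisfies the Liouville-type (sl₂ Toda) equation ∂_z∂_z̄ ln ρ = −(4/κ) ρ on Ω. -/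

import Mathlib

open Complex Matrix

noncomputable section

/-- Wirtinger derivative `∂_z` of a ℂ-valued function of one complex variable,
viewed as a function of two real variables:  `∂_z F = ½(∂_x F − i ∂_y F)`. -/
def wdz (f : ℂ → ℂ) (z : ℂ) : ℂ :=
  (1 / 2 : ℂ) * (fderiv ℝ f z 1 - Complex.I * fderiv ℝ f z Complex.I)

/-- Wirtinger derivative `∂_z̄ F = ½(∂_x F + i ∂_y F)`. -/
def wdzbar (f : ℂ → ℂ) (z : ℂ) : ℂ :=
  (1 / 2 : ℂ) * (fderiv ℝ f z 1 + Complex.I * fderiv ℝ f z Complex.I)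

/-- Entrywise Wirtinger derivative `∂_z` for matrix-valued functions. -/
def mdz {n m : Type*} (F : ℂ → Matrix n m ℂ) (z : ℂ) : Matrix n m ℂ :=
  Matrix.of fun i j => wdz (fun w => F w i j) z

/-- Entrywise Wirtinger derivative `∂_z̄` for matrix-valued functions. -/
def mdzbar {n m : Type*} (F : ℂ → Matrix n m ℂ) (z : ℂ) : Matrix n m ℂ :=
  Matrix.of fun i j => wdzbar (fun w => F w i j) z

/-- A matrix-valued function is smooth on a set if each entry is `C^∞`
as a function of the two real variables. -/
def MSmoothOn {n m : Type*} (F : ℂ → Matrix n m ℂ) (Ω : Set ℂ) : Prop :=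
  ∀ i j, ContDiffOn ℝ (⊤ : ℕ∞) (fun z => F z i j) Ω

def matH : Matrix (Fin 2) (Fin 2) ℂ := !![1, 0; 0, -1]
def matEp : Matrix (Fin 2) (Fin 2) ℂ := !![0, 1; 0, 0]

/-! ### Auxiliary Wirtinger-calculus lemmas -/

section Aux

variable {f g : ℂ → ℂ} {z : ℂ}

lemma wdz_congr (h : f =ᶠ[nhds z] g) : wdz f z = wdz g z := by
  unfold wdz; rw [h.fderiv_eq]

lemma wdz_add (hf : DifferentiableAt ℝ f z) (hg : DifferentiableAt ℝ g z) :
    wdz (fun w => f w + g w) z = wdz f z + wdz g z := by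
  unfold wdz; rw [fderiv_fun_add hf hg]; simp; ring

lemma wdz_mul (hf : DifferentiableAt ℝ f z) (hg : DifferentiableAt ℝ g z) :
    wdz (fun w => f w * g w) z = wdz f z * g z + f z * wdz g z := by
  unfold wdz; rw [fderiv_fun_mul hf hg]; simp [smul_eq_mul]; ring

lemma wdzbar_mul (hf : DifferentiableAt ℝ f z) (hg : DifferentiableAt ℝ g z) :
    wdzbar (fun w => f w * g w) z = wdzbar f z * g z + f z * wdzbar g z := by
  unfold wdzbar; rw [fderiv_fun_mul hf hg]; simp [smul_eq_mul]; ring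

lemma wdz_const_mul (c : ℂ) (hf : DifferentiableAt ℝ f z) :
    wdz (fun w => c * f w) z = c * wdz f z := by
  unfold wdz; rw [fderiv_const_mul hf]; simp [smul_eq_mul]; ring

lemma wdz_neg : wdz (fun w => -f w) z = -wdz f z := by
  unfold wdz; rw [fderiv_fun_neg]; simp; ring

lemma diffAt_conj (hf : DifferentiableAt ℝ f z) :
    DifferentiableAt ℝ (fun w => starRingEnd ℂ (f w)) z :=
  (Complex.conjCLE.toContinuousLinearMap.differentiableAt).comp z hf

lemma fderiv_conj_apply (hf : DifferentiableAt ℝ f z) (u : ℂ) :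
    fderiv ℝ (fun w => starRingEnd ℂ (f w)) z u = starRingEnd ℂ (fderiv ℝ f z u) := by
  have h : HasFDerivAt (fun w => starRingEnd ℂ (f w))
      ((Complex.conjCLE.toContinuousLinearMap).comp (fderiv ℝ f z)) z :=
    (Complex.conjCLE.toContinuousLinearMap.hasFDerivAt).comp z hf.hasFDerivAt
  rw [h.fderiv]; rfl

lemma wdz_conj (hf : DifferentiableAt ℝ f z) :
    wdz (fun w => starRingEnd ℂ (f w)) z = starRingEnd ℂ (wdzbar f z) := by
  unfold wdz wdzbar
  rw [fderiv_conj_apply hf 1, fderiv_conj_apply hf Complex.I]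
  simp only [_root_.map_mul, map_add, map_div₀, _root_.map_one, map_ofNat, Complex.conj_I]
  ring

lemma wdzbar_conj (hf : DifferentiableAt ℝ f z) :
    wdzbar (fun w => starRingEnd ℂ (f w)) z = starRingEnd ℂ (wdz f z) := by
  unfold wdz wdzbar
  rw [fderiv_conj_apply hf 1, fderiv_conj_apply hf Complex.I]
  simp only [_root_.map_mul, map_sub, map_add, map_div₀, _root_.map_one, map_ofNat, Complex.conj_I]
  ring

lemma diffAt_inv (hf : DifferentiableAt ℝ f z) (h0 : f z ≠ 0) :
    DifferentiableAt ℝ (fun w => (f w)⁻¹) z :=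
  (((hasDerivAt_inv h0).hasFDerivAt.restrictScalars ℝ).comp z hf.hasFDerivAt).differentiableAt

lemma fderiv_inv_comp_apply (hf : DifferentiableAt ℝ f z) (h0 : f z ≠ 0) (u : ℂ) :
    fderiv ℝ (fun w => (f w)⁻¹) z u = -(f z ^ 2)⁻¹ * fderiv ℝ f z u := by
  have h := (((hasDerivAt_inv h0).hasFDerivAt.restrictScalars ℝ).comp z hf.hasFDerivAt)
  rw [show (fun w => (f w)⁻¹) = (fun y => y⁻¹) ∘ f from rfl, h.fderiv]
  simp [mul_comm]

lemma wdzbar_inv (hf : DifferentiableAt ℝ f z) (h0 : f z ≠ 0) :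
    wdzbar (fun w => (f w)⁻¹) z = -(f z ^ 2)⁻¹ * wdzbar f z := by
  unfold wdzbar
  rw [fderiv_inv_comp_apply hf h0, fderiv_inv_comp_apply hf h0]
  ring

lemma fderiv_log_comp_apply (r : ℂ → ℝ) (hr : DifferentiableAt ℝ r z) (h0 : r z ≠ 0) (u : ℂ) :
    fderiv ℝ (fun w => ((Real.log (r w) : ℝ) : ℂ)) z u
      = (((r z)⁻¹ * fderiv ℝ r z u : ℝ) : ℂ) := by
  have h1 : HasFDerivAt (fun w => Real.log (r w)) ((r z)⁻¹ • fderiv ℝ r z) z :=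
    (Real.hasDerivAt_log h0).comp_hasFDerivAt z hr.hasFDerivAt
  have h2 := (Complex.ofRealCLM.hasFDerivAt).comp z h1
  rw [show (fun w => ((Real.log (r w) : ℝ) : ℂ))
      = Complex.ofRealCLM ∘ (fun w => Real.log (r w)) from rfl, h2.fderiv]
  simp

lemma fderiv_ofReal_comp_apply (r : ℂ → ℝ) (hr : DifferentiableAt ℝ r z) (u : ℂ) :
    fderiv ℝ (fun w => ((r w : ℝ) : ℂ)) z u = ((fderiv ℝ r z u : ℝ) : ℂ) := by
  have h2 := (Complex.ofRealCLM.hasFDerivAt).comp z hr.hasFDerivAt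
  rw [show (fun w => ((r w : ℝ) : ℂ)) = Complex.ofRealCLM ∘ r from rfl, h2.fderiv]
  simp

lemma wdzbar_log (r : ℂ → ℝ) (hr : DifferentiableAt ℝ r z) (h0 : r z ≠ 0) :
    wdzbar (fun w => ((Real.log (r w) : ℝ) : ℂ)) z
      = (((r z) : ℂ))⁻¹ * wdzbar (fun w => ((r w : ℝ) : ℂ)) z := by
  unfold wdzbar
  rw [fderiv_log_comp_apply r hr h0, fderiv_log_comp_apply r hr h0,
    fderiv_ofReal_comp_apply r hr, fderiv_ofReal_comp_apply r hr]
  push_cast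
  ring

lemma second_stuff {Ω : Set ℂ} (hΩ : IsOpen Ω) (hf : ContDiffOn ℝ (⊤ : ℕ∞) f Ω) (hz : z ∈ Ω) :
    (∀ u, HasFDerivAt (fun w => fderiv ℝ f w u)
        ((ContinuousLinearMap.apply ℝ ℂ u).comp (fderiv ℝ (fderiv ℝ f) z)) z) ∧
      (∀ v w, fderiv ℝ (fderiv ℝ f) z v w = fderiv ℝ (fderiv ℝ f) z w v) := by
  have hf' : ContDiffOn ℝ 1 (fderiv ℝ f) Ω :=
    hf.fderiv_of_isOpen hΩ (WithTop.coe_le_coe.mpr le_top)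
  have hf'd : DifferentiableAt ℝ (fderiv ℝ f) z :=
    (hf'.contDiffAt (hΩ.mem_nhds hz)).differentiableAt one_ne_zero
  constructor
  · intro u
    exact (ContinuousLinearMap.apply ℝ ℂ u).hasFDerivAt.comp z hf'd.hasFDerivAt
  · refine second_derivative_symmetric_of_eventually (f := f) ?_ hf'd.hasFDerivAt
    filter_upwards [hΩ.mem_nhds hz] with y hy
    exact ((hf.contDiffAt (hΩ.mem_nhds hy)).differentiableAt (by simp)).hasFDerivAt

lemma diffAt_wdz {Ω : Set ℂ} (hΩ : IsOpen Ω) (hf : ContDiffOn ℝ (⊤ : ℕ∞) f Ω) (hz : z ∈ Ω) :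
    DifferentiableAt ℝ (fun w => wdz f w) z := by
  obtain ⟨happ, -⟩ := second_stuff hΩ hf hz
  unfold wdz
  exact (((happ 1).differentiableAt.sub
    ((happ Complex.I).differentiableAt.const_mul Complex.I)).const_mul (1/2 : ℂ))

lemma wdz_wdzbar_swap {Ω : Set ℂ} (hΩ : IsOpen Ω) (hf : ContDiffOn ℝ (⊤ : ℕ∞) f Ω) (hz : z ∈ Ω) :
    wdzbar (fun w => wdz f w) z = wdz (fun w => wdzbar f w) z := by
  obtain ⟨happ, hsymm⟩ := second_stuff hΩ hf hz
  have hD : ∀ (c : ℂ), HasFDerivAt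
      (fun w => (1/2 : ℂ) * (fderiv ℝ f w 1 + c * fderiv ℝ f w Complex.I))
      ((1/2 : ℂ) • (((ContinuousLinearMap.apply ℝ ℂ 1).comp (fderiv ℝ (fderiv ℝ f) z))
        + c • ((ContinuousLinearMap.apply ℝ ℂ Complex.I).comp (fderiv ℝ (fderiv ℝ f) z)))) z := by
    intro c
    exact (((happ 1).add ((happ Complex.I).const_mul c)).const_mul (1/2 : ℂ))
  unfold wdz wdzbar
  rw [show (fun w => (1 / 2 : ℂ) * ((fderiv ℝ f w) 1 - Complex.I * (fderiv ℝ f w) Complex.I))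
      = fun w => (1/2 : ℂ) * (fderiv ℝ f w 1 + (-Complex.I) * fderiv ℝ f w Complex.I) by
    funext w; ring]
  rw [(hD (-Complex.I)).fderiv, (hD Complex.I).fderiv]
  simp only [ContinuousLinearMap.smul_apply, ContinuousLinearMap.add_apply,
    ContinuousLinearMap.comp_apply, ContinuousLinearMap.apply_apply, smul_eq_mul]
  rw [hsymm 1 Complex.I]
  ring

end Aux

/-- for the diagonal gauge field `A_z = aH`, `A_z̄ = −ā H` and
one-step Higgs field `Ψ = ψE₊` with `ψ` nowhere vanishing, the self-dual
Chern–Simons equations on `Ω` imply the Liouville-type (sl₂ Toda) equation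
`∂_z∂_z̄ ln|ψ|² = −(4/κ)|ψ|²` on `Ω`. -/
theorem stmt8 (Ω : Set ℂ) (hΩ : IsOpen Ω) (κ : ℝ) (hκ : 0 < κ)
    (a ψ : ℂ → ℂ)
    (ha : ContDiffOn ℝ (⊤ : ℕ∞) a Ω) (hψ : ContDiffOn ℝ (⊤ : ℕ∞) ψ Ω)
    (hψ0 : ∀ z ∈ Ω, ψ z ≠ 0)
    (Az Azb Ψ : ℂ → Matrix (Fin 2) (Fin 2) ℂ)
    (hAz : ∀ z, Az z = a z • matH)
    (hAzb : ∀ z, Azb z = (-(starRingEnd ℂ) (a z)) • matH)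
    (hΨ : ∀ z, Ψ z = ψ z • matEp)
    (h1 : ∀ z ∈ Ω, mdzbar Ψ z + (Azb z * Ψ z - Ψ z * Azb z) = 0)
    (h2 : ∀ z ∈ Ω,
        mdz Azb z - mdzbar Az z + (Az z * Azb z - Azb z * Az z)
          = (-(2 / κ : ℝ) : ℂ) • ((Ψ z)ᴴ * Ψ z - Ψ z * (Ψ z)ᴴ)) :
    ∀ z ∈ Ω,
      wdz (fun w => wdzbar (fun v => ((Real.log (Complex.normSq (ψ v)) : ℝ) : ℂ)) w) z
        = ((-(4 / κ) * Complex.normSq (ψ z) : ℝ) : ℂ) := by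
  -- differentiability basics
  have hψd : ∀ w ∈ Ω, DifferentiableAt ℝ ψ w := fun w hw =>
    (hψ.contDiffAt (hΩ.mem_nhds hw)).differentiableAt (by simp)
  have had : ∀ w ∈ Ω, DifferentiableAt ℝ a w := fun w hw =>
    (ha.contDiffAt (hΩ.mem_nhds hw)).differentiableAt (by simp)
  have hconjψd : ∀ w ∈ Ω, DifferentiableAt ℝ (fun v => starRingEnd ℂ (ψ v)) w := fun w hw =>
    diffAt_conj (hψd w hw)
  have hconjad : ∀ w ∈ Ω, DifferentiableAt ℝ (fun v => starRingEnd ℂ (a v)) w := fun w hw =>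
    diffAt_conj (had w hw)
  have hrd : ∀ w ∈ Ω, DifferentiableAt ℝ (fun v => Complex.normSq (ψ v)) w := by
    intro w hw
    have : (fun v => Complex.normSq (ψ v)) = fun v => (ψ v * starRingEnd ℂ (ψ v)).re := by
      funext v; rw [Complex.mul_conj]; simp
    rw [this]
    exact (Complex.reCLM.differentiableAt).comp w ((hψd w hw).mul (hconjψd w hw))
  -- scalar form of equation (1)
  have h1' : ∀ w ∈ Ω, wdzbar ψ w = 2 * (starRingEnd ℂ) (a w) * ψ w := by
    intro w hw
    have h01 : (mdzbar Ψ w + (Azb w * Ψ w - Ψ w * Azb w)) 0 1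
        = (0 : Matrix (Fin 2) (Fin 2) ℂ) 0 1 := by rw [h1 w hw]
    simp only [mdzbar, hΨ, hAzb, Matrix.add_apply, Matrix.sub_apply, Matrix.mul_apply,
      Fin.sum_univ_two, Matrix.of_apply, Matrix.smul_apply, matH, matEp, smul_eq_mul,
      Matrix.cons_val', Matrix.cons_val_zero, Matrix.cons_val_one, Matrix.head_cons,
      Matrix.head_fin_const, Matrix.empty_val', Matrix.cons_val_fin_one, Matrix.zero_apply,
      mul_one, mul_zero, mul_neg, neg_mul, zero_mul, add_zero, zero_add, neg_neg, neg_zero] at h01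
    linear_combination h01
  -- scalar form of equation (2)
  have h2' : ∀ w ∈ Ω, wdz (fun v => (starRingEnd ℂ) (a v)) w + wdzbar a w
      = -(2 / κ : ℂ) * (ψ w * (starRingEnd ℂ) (ψ w)) := by
    intro w hw
    have h00 : (mdz Azb w - mdzbar Az w + (Az w * Azb w - Azb w * Az w)) 0 0
        = ((-(2 / κ : ℝ) : ℂ) • ((Ψ w)ᴴ * Ψ w - Ψ w * (Ψ w)ᴴ)) 0 0 := by rw [h2 w hw]
    simp only [mdz, mdzbar, hΨ, hAzb, hAz, Matrix.add_apply, Matrix.sub_apply, Matrix.mul_apply,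
      Fin.sum_univ_two, Matrix.of_apply, Matrix.smul_apply, matH, matEp, smul_eq_mul,
      Matrix.conjTranspose_apply, Matrix.cons_val', Matrix.cons_val_zero, Matrix.cons_val_one,
      Matrix.head_cons, Matrix.head_fin_const, Matrix.empty_val', Matrix.cons_val_fin_one,
      map_zero, _root_.map_one, _root_.map_mul, star_zero, star_one, Complex.star_def,
      mul_one, mul_zero, mul_neg, neg_mul, zero_mul, add_zero, zero_add, neg_neg, neg_zero,
      wdz_neg] at h00
    simp only [starRingEnd_apply] at h00 ⊢
    push_cast at h00 ⊢
    linear_combination -h00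
  -- the formula for the inner Wirtinger derivative on Ω
  have hG : ∀ w ∈ Ω, wdzbar (fun v => ((Real.log (Complex.normSq (ψ v)) : ℝ) : ℂ)) w
      = 2 * starRingEnd ℂ (a w) + starRingEnd ℂ (wdz ψ w * (ψ w)⁻¹) := by
    intro w hw
    have hψw := hψ0 w hw
    have h0 : Complex.normSq (ψ w) ≠ 0 := by simpa [Complex.normSq_eq_zero] using hψw
    have e1 := wdzbar_log (z := w) (fun v => Complex.normSq (ψ v)) (hrd w hw) h0
    have e2 : wdzbar (fun v => ((Complex.normSq (ψ v) : ℝ) : ℂ)) w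
        = wdzbar ψ w * starRingEnd ℂ (ψ w) + ψ w * starRingEnd ℂ (wdz ψ w) := by
      have hNe : (fun v => ((Complex.normSq (ψ v) : ℝ) : ℂ))
          = fun v => ψ v * starRingEnd ℂ (ψ v) :=
        funext fun v => (Complex.mul_conj (ψ v)).symm
      rw [hNe, wdzbar_mul (hψd w hw) (hconjψd w hw), wdzbar_conj (hψd w hw)]
    rw [e1, e2, h1' w hw]
    have hcψw : starRingEnd ℂ (ψ w) ≠ 0 := by simpa using hψw
    rw [show ((Complex.normSq (ψ w) : ℝ) : ℂ) = ψ w * starRingEnd ℂ (ψ w) from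
      (Complex.mul_conj (ψ w)).symm]
    rw [_root_.map_mul, map_inv₀]
    field_simp
  -- main computation
  intro z hz
  have hψz := hψ0 z hz
  have hcψz : starRingEnd ℂ (ψ z) ≠ 0 := by simpa using hψz
  have hEq : (fun w => wdzbar (fun v => ((Real.log (Complex.normSq (ψ v)) : ℝ) : ℂ)) w)
      =ᶠ[nhds z] (fun w => 2 * starRingEnd ℂ (a w) + starRingEnd ℂ (wdz ψ w * (ψ w)⁻¹)) := by
    filter_upwards [hΩ.mem_nhds hz] with w hw using hG w hw
  rw [wdz_congr hEq]
  -- differentiability of the pieces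
  have hPd : DifferentiableAt ℝ (fun w => wdz ψ w) z := diffAt_wdz hΩ hψ hz
  have hinvd : DifferentiableAt ℝ (fun w => (ψ w)⁻¹) z := diffAt_inv (hψd z hz) hψz
  have hd1 : DifferentiableAt ℝ (fun w => 2 * starRingEnd ℂ (a w)) z :=
    (hconjad z hz).const_mul 2
  have hd2' : DifferentiableAt ℝ (fun w => wdz ψ w * (ψ w)⁻¹) z := hPd.mul hinvd
  have hd2 : DifferentiableAt ℝ (fun w => starRingEnd ℂ (wdz ψ w * (ψ w)⁻¹)) z :=
    diffAt_conj hd2'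
  rw [wdz_add hd1 hd2, wdz_const_mul 2 (hconjad z hz), wdz_conj (had z hz),
    wdz_conj hd2']
  -- compute wdzbar of wdz ψ / ψ
  have hswap : wdzbar (fun w => wdz ψ w) z = wdz (fun w => wdzbar ψ w) z :=
    wdz_wdzbar_swap hΩ hψ hz
  have hbb : wdz (fun w => wdzbar ψ w) z
      = 2 * starRingEnd ℂ (wdzbar a z) * ψ z + 2 * starRingEnd ℂ (a z) * wdz ψ z := by
    have hEq2 : (fun w => wdzbar ψ w)
        =ᶠ[nhds z] (fun w => 2 * starRingEnd ℂ (a w) * ψ w) := by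
      filter_upwards [hΩ.mem_nhds hz] with w hw using h1' w hw
    rw [wdz_congr hEq2, wdz_mul hd1 (hψd z hz), wdz_const_mul 2 (hconjad z hz),
      wdz_conj (had z hz)]
  have hQ : wdzbar (fun w => wdz ψ w * (ψ w)⁻¹) z = 2 * starRingEnd ℂ (wdzbar a z) := by
    rw [wdzbar_mul hPd hinvd, wdzbar_inv (hψd z hz) hψz, hswap, hbb, h1' z hz]
    field_simp
    ring
  rw [hQ]
  have h2z := h2' z hz
  have : ((-(4 / κ) * Complex.normSq (ψ z) : ℝ) : ℂ)
      = -(4 / κ : ℂ) * (ψ z * starRingEnd ℂ (ψ z)) := by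
    push_cast
    rw [← Complex.mul_conj]
  rw [this]
  rw [wdz_conj (had z hz)] at h2z
  simp only [_root_.map_mul, map_ofNat, Complex.conj_conj]
  linear_combination 2 * h2z
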